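/- arXiv:1109.5146 — 3 statements merged into one kernel-verified Lean document; each statement's English description precedes it below -/
import Mathlib

section
/- Let f : ℝ → ℝ be smooth, increasing, convex on ℝ with f(0) = 1, and log-convex (i.e. log ∘ f is convex). Then for every 0 < λ < 1 and every δ > 0 there exists k > 0 such that f(t/λ) + k ≥ (1 + δ) f(t) for all t ≥ 0. -/
theorem stmt_0 (f : ℝ → ℝ) (hf : ContDiff ℝ (⊤ : ℕ∞) f)
    (hpos : ∀ t, 0 < f t) (hmono : Monotone f)
    (hconv : ConvexOn ℝ Set.univ f) (hf0 : f 0 = 1)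
    (hlog : ConvexOn ℝ Set.univ (fun t => Real.log (f t))) :
    ∀ lam δ : ℝ, 0 < lam → lam < 1 → 0 < δ →
      ∃ k > (0:ℝ), ∀ t ≥ (0:ℝ), f (t / lam) + k ≥ (1 + δ) * f t := by
  intro lam δ hlam0 hlam1 hδ
  have h1δ : (1:ℝ) < 1 + δ := by linarith
  set Y : ℝ := (1+δ) ^ ((1:ℝ)/(1-lam)) with hYdef
  have hYpos : 0 < Y := Real.rpow_pos_of_pos (by linarith) _
  have hY1 : 1 ≤ Y := Real.one_le_rpow h1δ.le (by apply div_nonneg <;> linarith)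
  refine ⟨(1+δ)*Y + 1, by positivity, ?_⟩
  intro t ht
  have htl : t ≤ t / lam := by
    rw [le_div_iff₀ hlam0]; nlinarith
  have htl0 : 0 ≤ t / lam := le_trans ht htl
  set y := f (t / lam) with hy
  have hy1 : (1:ℝ) ≤ y := hf0 ▸ hmono htl0
  have hypos : (0:ℝ) < y := lt_of_lt_of_le one_pos hy1
  have hlogineq : Real.log (f t) ≤ lam * Real.log y := by
    have h := hlog.2 (Set.mem_univ (t/lam)) (Set.mem_univ (0:ℝ))
      hlam0.le (by linarith : (0:ℝ) ≤ 1 - lam) (by ring)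
    simp only [smul_eq_mul] at h
    have hx : lam * (t/lam) + (1-lam) * 0 = t := by field_simp; ring
    rw [hx, hf0, Real.log_one] at h
    linarith
  have hft : f t ≤ y ^ lam := by
    have h1 : f t = Real.exp (Real.log (f t)) := (Real.exp_log (hpos t)).symm
    rw [h1, Real.rpow_def_of_pos hypos, mul_comm (Real.log y)]
    exact Real.exp_le_exp.2 hlogineq
  rcases le_total y Y with hcase | hcase
  · have h2 : y ^ lam ≤ Y ^ lam := Real.rpow_le_rpow hypos.le hcase hlam0.le
    have h3 : Y ^ lam ≤ Y := by
      calc Y ^ lam ≤ Y ^ (1:ℝ) := Real.rpow_le_rpow_of_exponent_le hY1 hlam1.le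
        _ = Y := Real.rpow_one Y
    have h4 : (1+δ) * f t ≤ (1+δ) * Y := by
      apply mul_le_mul_of_nonneg_left (by linarith) (by linarith)
    linarith
  · have hYe : Y ^ (1 - lam) = 1 + δ := by
      rw [hYdef, ← Real.rpow_mul (by linarith : (0:ℝ) ≤ 1+δ), one_div,
        inv_mul_cancel₀ (by linarith : (1:ℝ) - lam ≠ 0), Real.rpow_one]
    have h5 : (1:ℝ) + δ ≤ y ^ (1 - lam) := by
      rw [← hYe]
      exact Real.rpow_le_rpow hYpos.le hcase (by linarith)
    have h6 : (1+δ) * y ^ lam ≤ y ^ (1 - lam) * y ^ lam := by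
      apply mul_le_mul_of_nonneg_right h5 (Real.rpow_nonneg hypos.le _)
    have h7 : y ^ (1 - lam) * y ^ lam = y := by
      rw [← Real.rpow_add hypos]; norm_num
    have h8 : (1+δ) * f t ≤ (1+δ) * y ^ lam :=
      mul_le_mul_of_nonneg_left hft (by linarith)
    nlinarith
end

section
/- Let f : ℝ → ℝ be increasing, convex, log-convex with f(0) = 1 and superlinear at infinity (f(t)/t → ∞ as t → ∞). Then for every ε > 0 there exists μ with 0 < μ < 1 such that μ² (f(t/μ) + ε) ≥ f(t) + ε/2 for all t ≥ 0. -/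
/-!
Log-convexity through the point `(0, log 1)` gives `f (t / μ) ≥ (f t) ^ (1 / μ)` for `0 < μ ≤ 1`,
so it suffices to find `μ < 1` with `x + ε / 2 ≤ μ² (x ^ (1 / μ) + ε)` for all `x ≥ 1`.
For `x ≤ e²` this holds as soon as `μ²` is close enough to `1`, using `x ^ (1 / μ) ≥ x`;
for `x ≥ e²` the gain `x ^ (1 / μ - 1) ≥ e ^ (2 (1 / μ - 1)) ≥ 1 / μ²` absorbs the factor `μ²`.
-/

open Real Set

lemma rpow_inv_le_comp_div_of_convexOn_log {f : ℝ → ℝ}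
    (hlog : ConvexOn ℝ univ (fun t => log (f t))) (hf0 : f 0 = 1) {t μ : ℝ}
    (hμ : 0 < μ) (hμ1 : μ ≤ 1) (ht : 0 < f t) (ht' : 0 < f (t / μ)) :
    f t ^ μ⁻¹ ≤ f (t / μ) := by
  have hconv : log (f t) ≤ μ * log (f (t / μ)) := by
    have h := hlog.2 (mem_univ (t / μ)) (mem_univ 0) hμ.le (sub_nonneg.2 hμ1)
      (add_sub_cancel μ 1)
    simpa [smul_eq_mul, hf0, mul_div_cancel₀ t hμ.ne'] using h
  rw [← log_le_log_iff (rpow_pos_of_pos ht _) ht', log_rpow ht, inv_mul_le_iff₀ hμ]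
  exact hconv

lemma le_sq_mul_rpow_inv_of_exp_two_le {x μ : ℝ} (hx : exp 2 ≤ x) (hμ : 0 < μ) (hμ1 : μ ≤ 1) :
    x ≤ μ ^ 2 * x ^ μ⁻¹ := by
  have hx0 : 0 < x := (exp_pos 2).trans_le hx
  have hlogx : 2 ≤ log x := by rwa [le_log_iff_exp_le hx0]
  have hlogμ : log μ⁻¹ ≤ μ⁻¹ - 1 := log_le_sub_one_of_pos (inv_pos.2 hμ)
  have hμ1' : 0 ≤ μ⁻¹ - 1 := sub_nonneg.2 (one_le_inv_iff₀.2 ⟨hμ, hμ1⟩)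
  rw [← log_le_log_iff hx0 (by positivity), log_mul (by positivity) (by positivity),
    log_rpow hx0, log_pow, Nat.cast_ofNat]
  rw [log_inv] at hlogμ
  nlinarith

lemma add_half_le_sq_mul_rpow_inv_add {x μ ε : ℝ} (hx : 1 ≤ x) (hμ : 0 < μ)
    (hμ1 : μ ≤ 1) (hμε : (1 - μ ^ 2) * (exp 2 + ε) ≤ ε / 2) :
    x + ε / 2 ≤ μ ^ 2 * (x ^ μ⁻¹ + ε) := by
  have hμ2 : μ ^ 2 ≤ 1 := pow_le_one₀ hμ.le hμ1
  rcases le_total x (exp 2) with hsmall | hlarge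
  · have hpow : x ≤ x ^ μ⁻¹ := self_le_rpow_of_one_le hx (one_le_inv_iff₀.2 ⟨hμ, hμ1⟩)
    have : (1 - μ ^ 2) * (x + ε) ≤ (1 - μ ^ 2) * (exp 2 + ε) := by gcongr
    nlinarith
  · have hpow := le_sq_mul_rpow_inv_of_exp_two_le hlarge hμ hμ1
    nlinarith [exp_pos 2]

lemma exists_lt_one_one_sub_sq_le {δ : ℝ} (hδ : 0 < δ) :
    ∃ μ : ℝ, 0 < μ ∧ μ < 1 ∧ 1 - μ ^ 2 ≤ δ := by
  refine ⟨1 - min δ 1 / 2, ?_, ?_, ?_⟩ <;>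
    nlinarith [min_le_left δ 1, min_le_right δ 1, lt_min hδ one_pos]

theorem stmt_1_general (f : ℝ → ℝ)
    (hmono : Monotone f) (hf0 : f 0 = 1)
    (hlog : ConvexOn ℝ Set.univ (fun t => Real.log (f t))) :
    ∀ ε > (0:ℝ), ∃ μ : ℝ, 0 < μ ∧ μ < 1 ∧
      ∀ t ≥ (0:ℝ), μ ^ 2 * (f (t / μ) + ε) ≥ f t + ε / 2 := by
  intro ε hε
  obtain ⟨μ, hμ0, hμ1, hμδ⟩ := exists_lt_one_one_sub_sq_le (δ := ε / (2 * (exp 2 + ε)))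
    (by positivity)
  have hμε : (1 - μ ^ 2) * (exp 2 + ε) ≤ ε / 2 := by
    rwa [le_div_iff₀ (by positivity), mul_comm 2, ← mul_assoc, ← le_div_iff₀ two_pos] at hμδ
  refine ⟨μ, hμ0, hμ1, fun t ht => ?_⟩
  have hft : 1 ≤ f t := hf0 ▸ hmono ht
  have hft' : 1 ≤ f (t / μ) := hf0 ▸ hmono (div_nonneg ht hμ0.le)
  calc f t + ε / 2 ≤ μ ^ 2 * (f t ^ μ⁻¹ + ε) :=
        add_half_le_sq_mul_rpow_inv_add hft hμ0 hμ1.le hμε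
    _ ≤ μ ^ 2 * (f (t / μ) + ε) := by
        gcongr
        exact rpow_inv_le_comp_div_of_convexOn_log hlog hf0 hμ0 hμ1.le (by linarith) (by linarith)

theorem stmt_1 (f : ℝ → ℝ) (hf : Continuous f)
    (hmono : Monotone f) (hconv : ConvexOn ℝ Set.univ f) (hf0 : f 0 = 1)
    (hlog : ConvexOn ℝ Set.univ (fun t => Real.log (f t)))
    (hsuper : Filter.Tendsto (fun t => f t / t) Filter.atTop Filter.atTop) :
    ∀ ε > (0:ℝ), ∃ μ : ℝ, 0 < μ ∧ μ < 1 ∧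
      ∀ t ≥ (0:ℝ), μ ^ 2 * (f (t / μ) + ε) ≥ f t + ε / 2 :=
  stmt_1_general f hmono hf0 hlog
end

section
/- Let f : ℝ → ℝ be C¹, increasing, convex with f(0) = 1. Suppose a measurable function u : Ω → [0,∞) on a finite measure space (Ω, μ) with weight 0 < g ∈ L^∞ satisfies ∫ g f(u) H(u) dμ ≤ ∫ g f(u) f'(u) dμ < ∞, where H(t) = ∫₀ᵗ f''(τ)(f(τ)−1)dτ, and suppose there exists T > 0 with (f(T) − 1) ≥ 2, i.e. H(t) ≥ 2(f'(t) − f'(T)) for t ≥ T. Then ∫ g f(u) f'(u) dμ ≤ 2 ∫_{{u < T}} g f(u) f'(u) dμ + 2 f'(T) ∫ g f(u) dμ. -/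
/-! On `{u ≥ T}` the bound on `H` gives `2 f'(u) ≤ H(u) + 2 f'(T)`. Since `f'' ≥ 0` and `f ≥ 1` on
`[0, ∞)`, `H ≥ 0` there, so integrating against `g f(u) ≥ 0` bounds twice the part of
`∫ g f(u) f'(u)` over `{u ≥ T}` by `∫ g f(u) H(u) + 2 f'(T) ∫ g f(u) ≤ ∫ g f(u) f'(u) + 2 f'(T) ∫ g f(u)`,
and the full integral on the right is absorbed into the left. -/

open MeasureTheory

theorem integral_le_two_mul_setIntegral_add_of_le_on_compl {Ω : Type*} [MeasurableSpace Ω]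
    {μ : Measure Ω} {F G K : Ω → ℝ} {s : Set Ω} {c : ℝ} (hs : MeasurableSet s)
    (hF : Integrable F μ) (hG : Integrable G μ) (hK : Integrable K μ)
    (hG0 : ∀ x ∈ s, 0 ≤ G x) (hK0 : ∀ x ∈ s, 0 ≤ K x) (hc : 0 ≤ c)
    (hGF : ∫ x, G x ∂μ ≤ ∫ x, F x ∂μ) (hle : ∀ x ∈ sᶜ, 2 * F x ≤ G x + 2 * c * K x) :
    ∫ x, F x ∂μ ≤ 2 * ∫ x in s, F x ∂μ + 2 * c * ∫ x, K x ∂μ := by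
  have hcompl : ∫ x in sᶜ, 2 * F x ∂μ ≤ ∫ x in sᶜ, (G x + 2 * c * K x) ∂μ :=
    setIntegral_mono_on (hF.const_mul 2).integrableOn
      (hG.integrableOn.add (hK.const_mul _).integrableOn) hs.compl hle
  rw [integral_const_mul, integral_add hG.integrableOn (hK.const_mul _).integrableOn,
    integral_const_mul] at hcompl
  have hG_le : ∫ x in sᶜ, G x ∂μ ≤ ∫ x, G x ∂μ := by
    linarith [integral_add_compl hs hG, setIntegral_nonneg (μ := μ) hs hG0]
  have hK_le : ∫ x in sᶜ, K x ∂μ ≤ ∫ x, K x ∂μ := by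
    linarith [integral_add_compl hs hK, setIntegral_nonneg (μ := μ) hs hK0]
  linarith [integral_add_compl hs hF, mul_le_mul_of_nonneg_left hK_le hc]

theorem ConvexOn.deriv_deriv_nonneg {f : ℝ → ℝ} (hconv : ConvexOn ℝ Set.univ f)
    (hf : Differentiable ℝ f) (x : ℝ) : 0 ≤ deriv (deriv f) x :=
  (monotoneOn_univ.mp (hconv.monotoneOn_deriv fun y _ => hf y)).deriv_nonneg

theorem stmt_16_general {Ω : Type*} [MeasurableSpace Ω] (μ : Measure Ω)
    (g u : Ω → ℝ) (hgpos : ∀ x, 0 < g x)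
    (hu : Measurable u) (hupos : ∀ x, 0 ≤ u x)
    (f : ℝ → ℝ) (hf : ContDiff ℝ 2 f) (hmono : Monotone f)
    (hconv : ConvexOn ℝ Set.univ f) (hf0 : f 0 = 1)
    (H : ℝ → ℝ)
    (hH : ∀ t, H t = ∫ τ in (0:ℝ)..t, deriv (deriv f) τ * (f τ - 1))
    (T : ℝ)
    (hHge : ∀ t ≥ T, H t ≥ 2 * (deriv f t - deriv f T))
    (hint1 : Integrable (fun x => g x * f (u x) * deriv f (u x)) μ)
    (hint2 : Integrable (fun x => g x * f (u x) * H (u x)) μ)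
    (hint3 : Integrable (fun x => g x * f (u x)) μ)
    (hmain : ∫ x, g x * f (u x) * H (u x) ∂μ ≤
             ∫ x, g x * f (u x) * deriv f (u x) ∂μ) :
    ∫ x, g x * f (u x) * deriv f (u x) ∂μ ≤
      2 * (∫ x in {x | u x < T}, g x * f (u x) * deriv f (u x) ∂μ) +
      2 * deriv f T * ∫ x, g x * f (u x) ∂μ := by
  have hf_one_le : ∀ t, 0 ≤ t → 1 ≤ f t := fun t ht => hf0 ▸ hmono ht
  have hH_nonneg : ∀ t, 0 ≤ t → 0 ≤ H t := fun t ht => by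
    rw [hH t]
    exact intervalIntegral.integral_nonneg ht fun τ hτ =>
      mul_nonneg (hconv.deriv_deriv_nonneg (hf.differentiable two_ne_zero) τ)
        (sub_nonneg.2 (hf_one_le τ hτ.1))
  have hgf_nonneg : ∀ x, 0 ≤ g x * f (u x) := fun x =>
    mul_nonneg (hgpos x).le (zero_le_one.trans (hf_one_le _ (hupos x)))
  refine integral_le_two_mul_setIntegral_add_of_le_on_compl
    (measurableSet_lt hu measurable_const) hint1 hint2 hint3
    (fun x _ => mul_nonneg (hgf_nonneg x) (hH_nonneg _ (hupos x)))
    (fun x _ => hgf_nonneg x) hmono.deriv_nonneg hmain fun x hx => ?_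
  have hHx := mul_le_mul_of_nonneg_left (hHge (u x) (not_lt.mp hx)) (hgf_nonneg x)
  linarith

theorem stmt_16 {Ω : Type*} [MeasurableSpace Ω] (μ : Measure Ω)
    [IsFiniteMeasure μ]
    (g u : Ω → ℝ) (hg : Measurable g) (hgpos : ∀ x, 0 < g x)
    (hgbdd : ∃ M, ∀ x, g x ≤ M)
    (hu : Measurable u) (hupos : ∀ x, 0 ≤ u x)
    (f : ℝ → ℝ) (hf : ContDiff ℝ 2 f) (hmono : Monotone f)
    (hconv : ConvexOn ℝ Set.univ f) (hf0 : f 0 = 1)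
    (H : ℝ → ℝ)
    (hH : ∀ t, H t = ∫ τ in (0:ℝ)..t, deriv (deriv f) τ * (f τ - 1))
    (T : ℝ) (hT : 0 < T) (hT2 : 2 ≤ f T - 1)
    (hHge : ∀ t ≥ T, H t ≥ 2 * (deriv f t - deriv f T))
    (hint1 : Integrable (fun x => g x * f (u x) * deriv f (u x)) μ)
    (hint2 : Integrable (fun x => g x * f (u x) * H (u x)) μ)
    (hint3 : Integrable (fun x => g x * f (u x)) μ)
    (hmain : ∫ x, g x * f (u x) * H (u x) ∂μ ≤
             ∫ x, g x * f (u x) * deriv f (u x) ∂μ) :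
    ∫ x, g x * f (u x) * deriv f (u x) ∂μ ≤
      2 * (∫ x in {x | u x < T}, g x * f (u x) * deriv f (u x) ∂μ) +
      2 * deriv f T * ∫ x, g x * f (u x) ∂μ :=
  stmt_16_general μ g u hgpos hu hupos f hf hmono hconv hf0 H hH T hHge hint1 hint2 hint3 hmain
end
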